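/- The function f(p) = (1/2)·(−p ln p − (1−p) ln(1−p) + (1−p)^4 ln 2) on (0,1) attains a maximum value strictly greater than 0.392 and strictly less than 0.393. -/

import Mathlib

/-- The binary entropy function. -/
noncomputable def hB (p : ℝ) : ℝ := -p * Real.log p - (1 - p) * Real.log (1 - p)

/-!
`f` is concave on `[0, 1]`: `2 f'' = 12 (1 - p)² ln 2 - 1 / (p (1 - p))`, and
`12 ln 2 · p (1 - p)³ ≤ 12 ln 2 · 27/256 < 1`. Hence `f` lies below its tangent at `c = 17/100`,
which is so close to the maximiser that `f'(c) ≈ 1.4·10⁻⁴`, and `f(c) ≈ 0.39242`. The logarithms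
at `17/100` and `83/100` are evaluated with the Taylor series of `log (1 - x)`.
The maximum on `[0, 1]` exists by compactness and is interior because `f 0 = ln 2 / 2` and `f 1 = 0`.
-/

open Real Set

theorem ConcaveOn.le_add_mul_sub_of_hasDerivAt {S : Set ℝ} {f : ℝ → ℝ} {x y f' : ℝ}
    (hf : ConcaveOn ℝ S f) (hx : x ∈ S) (hy : y ∈ S) (hfx : HasDerivAt f f' x) :
    f y ≤ f x + f' * (y - x) := by
  rcases lt_trichotomy x y with hxy | rfl | hyx
  · have h := hf.slope_le_of_hasDerivAt hx hy hxy hfx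
    rw [slope_def_field, div_le_iff₀ (sub_pos.2 hxy)] at h
    linarith
  · simp
  · have h := hf.le_slope_of_hasDerivAt hy hx hyx hfx
    rw [slope_def_field, le_div_iff₀ (sub_pos.2 hyx)] at h
    linarith

theorem mul_one_sub_pow_three_le (p : ℝ) : p * (1 - p) ^ 3 ≤ 27 / 256 := by
  nlinarith [mul_nonneg (sq_nonneg (p - 1 / 4)) (add_nonneg (sq_nonneg (p - 5 / 4))
    (by norm_num : (0 : ℝ) ≤ 1 / 8))]

theorem hB_eq_binEntropy : hB = binEntropy := by
  ext p
  simp only [hB, binEntropy, log_inv]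
  ring

noncomputable def firstLowerBound (p : ℝ) : ℝ := (1 / 2) * (hB p + (1 - p) ^ 4 * log 2)

noncomputable def firstLowerBoundDeriv (p : ℝ) : ℝ :=
  (1 / 2) * (log (1 - p) - log p - 4 * (1 - p) ^ 3 * log 2)

theorem continuous_firstLowerBound : Continuous firstLowerBound := by
  unfold firstLowerBound
  rw [hB_eq_binEntropy]
  fun_prop

theorem hasDerivAt_firstLowerBound {p : ℝ} (hp₀ : p ≠ 0) (hp₁ : p ≠ 1) :
    HasDerivAt firstLowerBound (firstLowerBoundDeriv p) p := by
  unfold firstLowerBound firstLowerBoundDeriv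
  rw [hB_eq_binEntropy]
  refine (((hasDerivAt_binEntropy hp₀ hp₁).add
    ((((hasDerivAt_id p).const_sub 1).pow 4).mul_const (log 2))).const_mul (1 / 2)).congr_deriv ?_
  simp only [id]
  ring

theorem hasDerivAt_firstLowerBoundDeriv {p : ℝ} (hp₀ : p ≠ 0) (hp₁ : p ≠ 1) :
    HasDerivAt firstLowerBoundDeriv
      ((1 / 2) * (-1 / (1 - p) - 1 / p + 12 * (1 - p) ^ 2 * log 2)) p := by
  have h₁ : HasDerivAt (fun p ↦ 1 - p) (-1) p := by simpa using (hasDerivAt_id p).const_sub 1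
  unfold firstLowerBoundDeriv
  refine ((((h₁.log (sub_ne_zero.2 hp₁.symm)).sub (hasDerivAt_log hp₀)).sub
    (((h₁.pow 3).const_mul 4).mul_const (log 2))).const_mul (1 / 2)).congr_deriv ?_
  simp only [one_div]
  ring

theorem firstLowerBound_second_deriv_nonpos {p : ℝ} (hp₀ : 0 < p) (hp₁ : p < 1) :
    (1 / 2) * (-1 / (1 - p) - 1 / p + 12 * (1 - p) ^ 2 * log 2) ≤ 0 := by
  have hq : 0 < 1 - p := sub_pos.2 hp₁
  have key : 12 * log 2 * (p * (1 - p) ^ 3) ≤ 1 := by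
    nlinarith [mul_one_sub_pow_three_le p, log_two_lt_d9, log_pos one_lt_two,
      mul_pos hp₀ (pow_pos hq 3)]
  have e : -1 / (1 - p) - 1 / p + 12 * (1 - p) ^ 2 * log 2 =
      (12 * log 2 * (p * (1 - p) ^ 3) - 1) / (p * (1 - p)) := by
    field_simp [hp₀.ne', hq.ne']
    ring
  rw [e]
  exact mul_nonpos_of_nonneg_of_nonpos (by norm_num)
    (div_nonpos_of_nonpos_of_nonneg (by linarith) (mul_pos hp₀ hq).le)

theorem concaveOn_firstLowerBound : ConcaveOn ℝ (Icc 0 1) firstLowerBound := by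
  have hI : ∀ p ∈ interior (Icc (0 : ℝ) 1), 0 < p ∧ p < 1 := by
    simp only [interior_Icc, mem_Ioo, imp_self, implies_true]
  exact concaveOn_of_hasDerivWithinAt2_nonpos (convex_Icc 0 1)
    continuous_firstLowerBound.continuousOn
    (fun p hp ↦ (hasDerivAt_firstLowerBound (hI p hp).1.ne' (hI p hp).2.ne).hasDerivWithinAt)
    (fun p hp ↦ (hasDerivAt_firstLowerBoundDeriv (hI p hp).1.ne' (hI p hp).2.ne).hasDerivWithinAt)
    (fun p hp ↦ firstLowerBound_second_deriv_nonpos (hI p hp).1 (hI p hp).2)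

theorem log_83_div_100_mem_Icc : log (83 / 100) ∈ Icc (-0.18634 : ℝ) (-0.18632) := by
  have h := abs_log_sub_add_sum_range_le (x := 17 / 100) (by norm_num) 6
  norm_num [Finset.sum_range_succ, abs_le] at h
  constructor <;> linarith [h.1, h.2]

theorem log_17_div_100_mem_Icc : log (17 / 100) ∈ Icc (-1.7720 : ℝ) (-1.7719) := by
  have h := abs_log_sub_add_sum_range_le (x := 8 / 25) (by norm_num) 10
  norm_num [Finset.sum_range_succ, abs_le] at h
  have e : log (17 / 100) = log (1 - 8 / 25) - 2 * log 2 := by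
    rw [show (17 / 100 : ℝ) = (1 - 8 / 25) / 2 ^ 2 by norm_num, log_div (by norm_num) (by norm_num),
      log_pow]
    norm_num
  rw [e]
  constructor <;> linarith [h.1, h.2, log_two_gt_d9, log_two_lt_d9]

theorem firstLowerBound_17_div_100 :
    firstLowerBound (17 / 100) = (1 / 2) * (-(17 / 100) * log (17 / 100) - 83 / 100 * log (83 / 100)
      + (83 / 100) ^ 4 * log 2) := by
  simp only [firstLowerBound, hB]
  norm_num

theorem lt_firstLowerBound_17_div_100 : 0.392 < firstLowerBound (17 / 100) := by
  obtain ⟨-, h₁⟩ := log_17_div_100_mem_Icc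
  obtain ⟨-, h₂⟩ := log_83_div_100_mem_Icc
  rw [firstLowerBound_17_div_100]
  linarith [log_two_gt_d9]

theorem firstLowerBoundDeriv_17_div_100_mem_Icc :
    firstLowerBoundDeriv (17 / 100) ∈ Icc (0 : ℝ) 0.0002 := by
  obtain ⟨h₁, h₁'⟩ := log_17_div_100_mem_Icc
  obtain ⟨h₂, h₂'⟩ := log_83_div_100_mem_Icc
  norm_num [firstLowerBoundDeriv]
  constructor <;> linarith [log_two_gt_d9, log_two_lt_d9]

theorem firstLowerBound_lt {q : ℝ} (hq : q ∈ Icc 0 1) : firstLowerBound q < 0.393 := by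
  obtain ⟨hs₀, hs₁⟩ := firstLowerBoundDeriv_17_div_100_mem_Icc
  have hc : firstLowerBound (17 / 100) < 0.3925 := by
    obtain ⟨h₁, -⟩ := log_17_div_100_mem_Icc
    obtain ⟨h₂, -⟩ := log_83_div_100_mem_Icc
    rw [firstLowerBound_17_div_100]
    linarith [log_two_lt_d9]
  calc firstLowerBound q
      ≤ firstLowerBound (17 / 100) + firstLowerBoundDeriv (17 / 100) * (q - 17 / 100) :=
        concaveOn_firstLowerBound.le_add_mul_sub_of_hasDerivAt (by norm_num) hq
          (hasDerivAt_firstLowerBound (by norm_num) (by norm_num))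
    _ < 0.393 := by nlinarith [hq.1, hq.2]

theorem max_first_lower_bound_Z2 :
    ∃ p ∈ Set.Ioo (0 : ℝ) 1,
      (∀ q ∈ Set.Ioo (0 : ℝ) 1,
        (1 / 2) * (hB q + (1 - q) ^ 4 * Real.log 2) ≤
          (1 / 2) * (hB p + (1 - p) ^ 4 * Real.log 2)) ∧
      0.392 < (1 / 2) * (hB p + (1 - p) ^ 4 * Real.log 2) ∧
      (1 / 2) * (hB p + (1 - p) ^ 4 * Real.log 2) < 0.393 := by
  obtain ⟨p, hp, hmax⟩ := isCompact_Icc.exists_isMaxOn (nonempty_Icc.2 zero_le_one)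
    continuous_firstLowerBound.continuousOn
  have hlow : 0.392 < firstLowerBound p :=
    lt_firstLowerBound_17_div_100.trans_le (hmax (by norm_num : (17 / 100 : ℝ) ∈ Icc 0 1))
  have hp₀ : p ≠ 0 := by
    rintro rfl
    norm_num [firstLowerBound, hB] at hlow
    linarith [log_two_lt_d9]
  have hp₁ : p ≠ 1 := by
    rintro rfl
    norm_num [firstLowerBound, hB] at hlow
  exact ⟨p, ⟨hp.1.lt_of_ne' hp₀, hp.2.lt_of_ne hp₁⟩,
    fun q hq ↦ hmax (Ioo_subset_Icc_self hq), hlow, firstLowerBound_lt hp⟩
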